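/- Let G be a graph and K a subset of vertices satisfying the Bouchitté–Todinca PMC conditions: (a) no component of G \ K is full for K, and (b) every pair of non-adjacent vertices x, y ∈ K satisfies x, y ∈ N(C) for some common component C of G \ K. Then the graph obtained from G by adding all missing edges inside K, and for each component C of G \ K adding all missing edges inside N(C), makes K a clique, and K is a maximal clique of this supergraph (no vertex outside K is adjacent to all of K). -/

import Mathlib

open SimpleGraph

variable {V : Type*}

/-- `C` is a connected component of `G \ K`:
nonempty, disjoint from `K`, connected, and maximal such. -/
def IsCompOf (G : SimpleGraph V) (K C : Set V) : Prop :=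
  C.Nonempty ∧ Disjoint C K ∧ (G.induce C).Connected ∧
    ∀ D : Set V, C ⊆ D → Disjoint D K → (G.induce D).Connected → D = C

/-- The neighborhood of a set `C`: vertices outside `C` with a neighbor in `C`. -/
def nbhd (G : SimpleGraph V) (C : Set V) : Set V :=
  {v | v ∉ C ∧ ∃ u ∈ C, G.Adj u v}

/-- `C` is a full component for `K` in `G`. -/
def IsFullComp (G : SimpleGraph V) (K C : Set V) : Prop :=
  IsCompOf G K C ∧ ∀ v ∈ K, ∃ u ∈ C, G.Adj u v

/-- Bouchitté–Todinca characterization of potential maximal cliques: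
(a) no full component, (b) non-adjacent pairs of `K` covered by a common component. -/
def IsPMC (G : SimpleGraph V) (K : Set V) : Prop :=
  (∀ C : Set V, IsCompOf G K C → ¬ ∀ v ∈ K, ∃ u ∈ C, G.Adj u v) ∧
  (∀ x ∈ K, ∀ y ∈ K, x ≠ y → ¬ G.Adj x y →
    ∃ C : Set V, IsCompOf G K C ∧ (∃ u ∈ C, G.Adj u x) ∧ (∃ u ∈ C, G.Adj u y))

/-- The supergraph of `G` obtained by completing `K` and each `N(C)` (for `C` a
component of `G \ K`) into cliques. -/
def fillGraph (G : SimpleGraph V) (K : Set V) : SimpleGraph V :=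
  G ⊔ SimpleGraph.fromRel (fun x y =>
    (x ∈ K ∧ y ∈ K) ∨ ∃ C : Set V, IsCompOf G K C ∧ x ∈ nbhd G C ∧ y ∈ nbhd G C)

/-!
By maximality of components, the neighbourhood of every component of `G \ K` lies in `K`, so
every edge added in the fill graph joins two vertices of `K`. Hence a vertex outside `K`
adjacent in the fill graph to all of `K` is already adjacent in `G` to all of `K`, and its
component would be full, contradicting (a).
-/

lemma induce_singleton_connected (G : SimpleGraph V) (v : V) :
    (G.induce ({v} : Set V)).Connected :=
  have : Nonempty ({v} : Set V) := ⟨⟨v, rfl⟩⟩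
  .of_subsingleton

lemma IsCompOf.nbhd_subset {G : SimpleGraph V} {K C : Set V} (hC : IsCompOf G K C) :
    nbhd G C ⊆ K := by
  intro v ⟨hvC, u, huC, huv⟩
  by_contra hvK
  obtain ⟨-, hCK, hCconn, hCmax⟩ := hC
  have hconn : (G.induce ({v} ∪ C)).Connected :=
    connected_induce_union (induce_singleton_connected G v).preconnected hCconn.preconnected
      rfl huC huv.symm
  have hdisj : Disjoint ({v} ∪ C) K :=
    Set.disjoint_union_left.mpr ⟨Set.disjoint_singleton_left.mpr hvK, hCK⟩
  exact hvC (hCmax _ Set.subset_union_right hdisj hconn ▸ Set.mem_union_left C rfl)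

/-- The component of `v` is the union of all connected sets avoiding `K` that contain `v`. -/
lemma exists_isCompOf_mem (G : SimpleGraph V) {K : Set V} {v : V} (hv : v ∉ K) :
    ∃ C : Set V, IsCompOf G K C ∧ v ∈ C := by
  set S : Set (Set V) := {D | v ∈ D ∧ Disjoint D K ∧ (G.induce D).Connected}
  have hvS : {v} ∈ S :=
    ⟨rfl, Set.disjoint_singleton_left.mpr hv, induce_singleton_connected G v⟩
  have hvC : v ∈ ⋃₀ S := Set.mem_sUnion_of_mem (Set.mem_singleton v) hvS
  refine ⟨⋃₀ S, ⟨⟨v, hvC⟩, Set.disjoint_sUnion_left.mpr fun D hD => hD.2.1, ?_, ?_⟩, hvC⟩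
  · exact induce_sUnion_connected_of_pairwise_not_disjoint ⟨_, hvS⟩
      (fun hD hE => ⟨v, hD.1, hE.1⟩) fun hD => hD.2.2
  · intro D hCD hDK hDconn
    exact (Set.subset_sUnion_of_mem (show D ∈ S from ⟨hCD hvC, hDK, hDconn⟩)).antisymm hCD

lemma fillGraph_isClique (G : SimpleGraph V) (K : Set V) : (fillGraph G K).IsClique K :=
  fun _ hx _ hy hne => Or.inr ⟨hne, Or.inl (Or.inl ⟨hx, hy⟩)⟩

lemma adj_of_fillGraph_adj_of_notMem {G : SimpleGraph V} {K : Set V} {v w : V} (hv : v ∉ K)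
    (h : (fillGraph G K).Adj v w) : G.Adj v w := by
  simp only [fillGraph, sup_adj, fromRel_adj] at h
  rcases h with hG | ⟨-, (⟨hvK, -⟩ | ⟨C, hC, hvC, -⟩) | (⟨-, hvK⟩ | ⟨C, hC, -, hvC⟩)⟩
  exacts [hG, (hv hvK).elim, (hv (hC.nbhd_subset hvC)).elim, (hv hvK).elim,
    (hv (hC.nbhd_subset hvC)).elim]

theorem stmt14_general (G : SimpleGraph V) (K : Set V)
    (ha : ∀ C : Set V, IsCompOf G K C → ¬ ∀ v ∈ K, ∃ u ∈ C, G.Adj u v) :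
    (fillGraph G K).IsClique K ∧
      ∀ v : V, v ∉ K → ¬ ∀ w ∈ K, (fillGraph G K).Adj v w := by
  refine ⟨fillGraph_isClique G K, fun v hv hall => ?_⟩
  obtain ⟨C, hC, hvC⟩ := exists_isCompOf_mem G hv
  exact ha C hC fun w hw => ⟨v, hvC, adj_of_fillGraph_adj_of_notMem hv (hall w hw)⟩

theorem stmt14 [Fintype V] (G : SimpleGraph V) (K : Set V)
    (ha : ∀ C : Set V, IsCompOf G K C → ¬ ∀ v ∈ K, ∃ u ∈ C, G.Adj u v)
    (hb : ∀ x ∈ K, ∀ y ∈ K, x ≠ y → ¬ G.Adj x y →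
      ∃ C : Set V, IsCompOf G K C ∧ x ∈ nbhd G C ∧ y ∈ nbhd G C) :
    (fillGraph G K).IsClique K ∧
      ∀ v : V, v ∉ K → ¬ ∀ w ∈ K, (fillGraph G K).Adj v w :=
  stmt14_general G K ha
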